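/- In the sequential prisoner's dilemma with observable types and endogenous matching, the perfectly assortative matching μ_{θθ} = x, μ_{ττ} = y, μ_{θτ} = μ_{τθ} = 0 has no blocking pair: since K(θ,τ) = (1/2)π(D,D) + (1/2)(π(C,C)+α) < K(θ,θ) = π(C,C)+α, the pair (θ,τ) cannot block, and this is the unique stable matching. -/
import Mathlib


inductive Agent : Type
  | θ : Agent
  | τ : Agent
deriving DecidableEq

open Agent

/-- Expected equilibrium utilities in the sequential PD with observable types. -/
noncomputable def K (πCC πDD α : ℝ) : Agent → Agent → ℝ
  | θ, θ => πCC + α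
  | θ, τ => (1/2) * πDD + (1/2) * (πCC + α)
  | τ, θ => (1/2) * πCC + (1/2) * πDD
  | τ, τ => πDD

/-- A matching configuration for population masses x of θ-types and y of τ-types. -/
def IsMatching (x y : ℝ) (μ : Agent → Agent → ℝ) : Prop :=
  (∀ a b, 0 ≤ μ a b) ∧ μ θ θ + μ θ τ = x ∧ μ τ θ + μ τ τ = y ∧ μ θ τ = μ τ θ

/-- (a, b) is a blocking pair for μ. -/
def Blocks (πCC πDD α : ℝ) (μ : Agent → Agent → ℝ) (a b : Agent) : Prop :=
  ∃ c d : Agent, c ≠ a ∧ d ≠ b ∧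
    K πCC πDD α a b > K πCC πDD α a d ∧
    K πCC πDD α b a > K πCC πDD α b c ∧
    μ a d > 0 ∧ μ b c > 0

def Stable (πCC πDD α : ℝ) (μ : Agent → Agent → ℝ) : Prop :=
  ∀ a b : Agent, ¬ Blocks πCC πDD α μ a b

/-- The perfectly assortative matching. -/
noncomputable def assort (x y : ℝ) : Agent → Agent → ℝ
  | θ, θ => x
  | τ, τ => y
  | _, _ => 0

theorem stmt13 (πDC πCC πDD πCD α x y : ℝ)
    (h1 : πDC > πCC) (h2 : πCC > πDD) (h3 : πDD > πCD)
    (hα : α > πDC - πCC) (hx : 0 < x) (hy : 0 < y) :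
    K πCC πDD α θ τ < K πCC πDD α θ θ ∧
    IsMatching x y (assort x y) ∧
    Stable πCC πDD α (assort x y) ∧
    ∀ μ : Agent → Agent → ℝ, IsMatching x y μ → Stable πCC πDD α μ →
      μ = assort x y := by
  refine ⟨by simp [K]; linarith, ⟨?_, by simp [assort], by simp [assort], by simp [assort]⟩, ?_, ?_⟩
  · intro a b
    rcases a with _|_ <;> rcases b with _|_ <;>
      simp_all [assort] <;> linarith
  · rintro a b ⟨c, d, hc, hd, h4, h5, h6, h7⟩
    rcases a with _|_ <;> rcases b with _|_ <;> rcases c with _|_ <;> rcases d with _|_ <;>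
      simp_all [assort, K] <;> linarith
  · rintro μ ⟨hpos, hxeq, hyeq, hsym⟩ hst
    have hzero : μ θ τ = 0 := by
      by_contra h
      have hpos' : μ θ τ > 0 := lt_of_le_of_ne (hpos θ τ) (Ne.symm h)
      exact hst θ θ ⟨τ, τ, by simp, by simp, by simp [K]; linarith, by simp [K]; linarith,
        hpos', hpos'⟩
    funext a b
    rcases a with _|_ <;> rcases b with _|_ <;> simp_all [assort] <;> linarith
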